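/- arXiv:1811.02664 — 4 statements merged into one kernel-verified Lean document; each statement's English description precedes it below -/
import Mathlib

section
/- Let n > k ≥ 1 with n - 1 > k, and let G be a k-connected graph of order n that is not complete. Then the diameter of G is at most ⌊(n+k-2)/k⌋. -/
open Finset SimpleGraph

/-- The status of a vertex: sum of distances to all other vertices. -/
noncomputable def status {V : Type*} [Fintype V] (G : SimpleGraph V) (x : V) : ℕ :=
  ∑ y, G.dist x y

/-- The Wiener index: sum of distances over unordered pairs of vertices. -/
noncomputable def wiener {V : Type*} [Fintype V] [DecidableEq V] (G : SimpleGraph V) : ℚ :=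
  (∑ p ∈ Finset.univ.offDiag, (G.dist p.1 p.2 : ℚ)) / 2

/-- Eccentricity of a vertex. -/
noncomputable def ecc {V : Type*} [Fintype V] (G : SimpleGraph V) (x : V) : ℕ :=
  Finset.univ.sup (fun y => G.dist x y)

/-- Diameter: maximum distance between pairs of vertices. -/
noncomputable def graphDiam {V : Type*} [Fintype V] (G : SimpleGraph V) : ℕ :=
  Finset.univ.sup (fun p : V × V => G.dist p.1 p.2)

/-- The set of vertices at distance exactly `i` from `x`. -/
noncomputable def sphere {V : Type*} [Fintype V] [DecidableEq V] (G : SimpleGraph V) (x : V) (i : ℕ) :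
    Finset V :=
  Finset.univ.filter (fun y => G.dist x y = i)

/-- `G` is `k`-connected: more than `k` vertices and removing any `k-1` vertices
leaves a connected graph. -/
def IsKConnected {V : Type*} [Fintype V] (G : SimpleGraph V) (k : ℕ) : Prop :=
  k < Fintype.card V ∧
    ∀ S : Finset V, S.card ≤ k - 1 → (G.induce ((↑S : Set V)ᶜ)).Connected
/-- Circular distance between two positions on a cycle of length `n`. -/
def circDist (n : ℕ) (i j : Fin n) : ℕ :=
  min ((i.val + n - j.val) % n) ((j.val + n - i.val) % n)

lemma circDist_comm (n : ℕ) (i j : Fin n) : circDist n i j = circDist n j i := by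
  unfold circDist; exact min_comm _ _

/-- The Harary graph `H_{k,n}` for `k` even: each vertex is adjacent to the
nearest `k/2` vertices in each direction around the circle. -/
def hararyEven (k n : ℕ) : SimpleGraph (Fin n) where
  Adj i j := i ≠ j ∧ circDist n i j ≤ k / 2
  symm := ⟨by
    intro i j h
    exact ⟨h.1.symm, by rw [circDist_comm]; exact h.2⟩⟩
  loopless := ⟨fun i h => h.1 rfl⟩

/-- The Harary graph `H_{k,n}` for `k` odd and `n` even: each vertex is adjacent to
the nearest `(k-1)/2` vertices in each direction and to the diametrically opposite
vertex. -/
def hararyOddEven (k n : ℕ) : SimpleGraph (Fin n) where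
  Adj i j := i ≠ j ∧ (circDist n i j ≤ (k - 1) / 2 ∨ circDist n i j = n / 2)
  symm := ⟨by
    intro i j h
    refine ⟨h.1.symm, ?_⟩
    rw [circDist_comm]; exact h.2⟩
  loopless := ⟨fun i h => h.1 rfl⟩

/-- The Harary graph `H_{k,n}` for `k` and `n` both odd: obtained from `H_{k-1,n}` by
adding an edge between vertices `a` and `a + (n-1)/2` for `0 ≤ a ≤ (n-1)/2`. -/
def hararyOddOdd (k n : ℕ) : SimpleGraph (Fin n) where
  Adj i j := i ≠ j ∧ (circDist n i j ≤ (k - 1) / 2 ∨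
    ∃ a : Fin n, a.val ≤ (n - 1) / 2 ∧
      ((i = a ∧ j.val = (a.val + (n - 1) / 2) % n) ∨
       (j = a ∧ i.val = (a.val + (n - 1) / 2) % n)))
  symm := ⟨by
    intro i j h
    refine ⟨h.1.symm, ?_⟩
    rcases h.2 with h2 | ⟨a, ha, hc⟩
    · left; rw [circDist_comm]; exact h2
    · right; exact ⟨a, ha, hc.symm⟩⟩
  loopless := ⟨fun i h => h.1 rfl⟩

/-!
Let `x, y` be at distance `d`. For `0 < i < d` every walk from `x` to `y` meets the sphere of
radius `i` about `x`, since distances from `x` change by at most one along an edge; so that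
sphere separates `x` from `y` and, by `k`-connectivity, has at least `k` vertices. These `d - 1`
spheres are disjoint and avoid `x` and `y`, hence `(d - 1) k + 2 ≤ n`, i.e. `d ≤ (n + k - 2) / k`.
-/

namespace SimpleGraph

variable {V : Type*} {G : SimpleGraph V}

lemma Walk.exists_mem_support_dist_eq (x : V) {i : ℕ} :
    ∀ {a b : V} (w : G.Walk a b), G.dist x a ≤ i → i ≤ G.dist x b →
      ∃ z ∈ w.support, G.dist x z = i
  | a, _, .nil, ha, hb => ⟨a, by simp, le_antisymm ha hb⟩
  | a, _, .cons h w, ha, hb => by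
    by_cases hai : G.dist x a = i
    · exact ⟨a, by simp, hai⟩
    · have hu := h.diff_dist_adj (u := x)
      obtain ⟨z, hz, hzi⟩ := w.exists_mem_support_dist_eq x (by omega) hb
      exact ⟨z, by simp [hz], hzi⟩

variable [Fintype V] [DecidableEq V]

lemma not_preconnected_induce_compl_sphere {x y : V} {i : ℕ} (hi₀ : 0 < i)
    (hi : i < G.dist x y) : ¬ (G.induce (sphere G x i : Set V)ᶜ).Preconnected := by
  intro hconn
  have hx : x ∈ (sphere G x i : Set V)ᶜ := by simp [sphere, hi₀.ne]
  have hy : y ∈ (sphere G x i : Set V)ᶜ := by simp [sphere, hi.ne']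
  obtain ⟨w⟩ := hconn ⟨x, hx⟩ ⟨y, hy⟩
  obtain ⟨z, hz, hzi⟩ := (w.map (Embedding.induce _).toHom).exists_mem_support_dist_eq x
    (by simp) hi.le
  obtain ⟨u, -, rfl⟩ := List.mem_map.mp (Walk.support_map _ w ▸ hz)
  exact u.2 (mem_filter.2 ⟨mem_univ _, hzi⟩)

lemma IsKConnected.le_card_sphere {k : ℕ} (hG : IsKConnected G k) {x y : V} {i : ℕ}
    (hi₀ : 0 < i) (hi : i < G.dist x y) : k ≤ #(sphere G x i) := by
  by_contra! hlt
  exact not_preconnected_induce_compl_sphere hi₀ hi (hG.2 _ (by omega)).preconnected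

lemma sum_card_sphere_add_two_le {x y : V} (hxy : x ≠ y) :
    ∑ i ∈ Ico 1 (G.dist x y), #(sphere G x i) + 2 ≤ Fintype.card V := by
  have hdisj : (Ico 1 (G.dist x y) : Set ℕ).PairwiseDisjoint (sphere G x) :=
    fun i _ j _ hij => Finset.disjoint_left.2 fun z hzi hzj => hij <| by
      simp only [sphere, mem_filter] at hzi hzj
      omega
  have hsub : (Ico 1 (G.dist x y)).biUnion (sphere G x) ⊆ {x, y}ᶜ := by
    intro z hz
    simp only [mem_biUnion, mem_Ico, sphere, mem_filter, mem_univ, true_and] at hz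
    obtain ⟨i, hi, rfl⟩ := hz
    simp only [mem_compl, mem_insert, mem_singleton]
    rintro (rfl | rfl) <;> simp at hi
  have := card_le_card hsub
  rw [card_biUnion hdisj, card_compl, card_pair hxy] at this
  have : 2 ≤ Fintype.card V := by simpa [card_pair hxy] using card_le_univ {x, y}
  omega

theorem IsKConnected.dist_sub_one_mul_add_two_le {k : ℕ} (hG : IsKConnected G k) {x y : V}
    (hxy : x ≠ y) : (G.dist x y - 1) * k + 2 ≤ Fintype.card V :=
  calc (G.dist x y - 1) * k + 2 = ∑ _i ∈ Ico 1 (G.dist x y), k + 2 := by simp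
    _ ≤ ∑ i ∈ Ico 1 (G.dist x y), #(sphere G x i) + 2 := by
      gcongr with i hi
      exact hG.le_card_sphere (mem_Ico.1 hi).1 (mem_Ico.1 hi).2
    _ ≤ Fintype.card V := sum_card_sphere_add_two_le hxy

end SimpleGraph

theorem diam_le_of_kConnected_general (n k : ℕ) (hk : 1 ≤ k)
    (G : SimpleGraph (Fin n)) (hG : IsKConnected G k) :
    graphDiam G ≤ (n + k - 2) / k := by
  refine Finset.sup_le fun ⟨x, y⟩ _ => (Nat.le_div_iff_mul_le hk).2 ?_
  rcases eq_or_ne x y with rfl | hxy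
  · simp
  · have h := hG.dist_sub_one_mul_add_two_le hxy
    dsimp only
    rw [Fintype.card_fin, Nat.sub_one_mul] at h
    omega

/-- A `k`-connected non-complete graph of order `n` with `n - 1 > k ≥ 1` has
diameter at most `⌊(n+k-2)/k⌋`. -/
theorem diam_le_of_kConnected (n k : ℕ) (hk : 1 ≤ k) (hn : k < n - 1)
    (G : SimpleGraph (Fin n)) (hG : IsKConnected G k) (hne : G ≠ ⊤) :
    graphDiam G ≤ (n + k - 2) / k :=
  diam_le_of_kConnected_general n k hk G hG
end

section
/- Let n - 1 > k ≥ 1 and let G be a k-connected graph of order n. Then for every vertex x of G, the status of x satisfies W(x,G) ≤ (1/2)·⌊(n+k-2)/k⌋·(2n+k-2-k·⌊(n+k-2)/k⌋). -/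
/-! Let `e` be the largest distance from `x`, attained at `y`. For `0 < i < e` the vertices at
distance `i` from `x` separate `x` from `y`, so there are at least `k` of them and the ball of
radius `i` has at least `1 + k i` vertices. Counting `W(x) = ∑_{i < e} #{z | d(x,z) > i}` layer by
layer gives `2 W(x) ≤ e (2n - 2 - k (e - 1))`, and the ball of radius `e - 1`, which misses `y`,
gives `k (e - 1) + 2 ≤ n`, i.e. `e ≤ ⌊(n + k - 2) / k⌋`. The quadratic bound is increasing in `e`
up to that value, where it equals the claimed one. -/

open Finset SimpleGraph

namespace SimpleGraph.Walk

variable {V : Type*} {G : SimpleGraph V}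

theorem exists_mem_support_dist_eq_s3 (x : V) {i : ℕ} {u v : V} (w : G.Walk u v)
    (hu : G.dist x u ≤ i) (hv : i ≤ G.dist x v) : ∃ z ∈ w.support, G.dist x z = i := by
  induction w with
  | nil => exact ⟨_, start_mem_support _, le_antisymm hu hv⟩
  | @cons a b _ hab p ih =>
    obtain hai | hai := hu.eq_or_lt
    · exact ⟨a, start_mem_support _, hai⟩
    · have : G.dist x b ≤ G.dist x a + 1 := by
        rcases hab.diff_dist_adj (u := x) with h | h | h <;> omega
      obtain ⟨z, hz, rfl⟩ := ih (by omega) hv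
      exact ⟨z, List.mem_cons_of_mem _ hz, rfl⟩

end SimpleGraph.Walk

theorem Finset.sum_eq_sum_range_card_filter_lt {ι : Type*} (s : Finset ι) (f : ι → ℕ) {e : ℕ}
    (hf : ∀ x ∈ s, f x ≤ e) : ∑ x ∈ s, f x = ∑ i ∈ range e, #{x ∈ s | i < f x} := by
  simp only [card_filter]
  rw [sum_comm]
  refine sum_congr rfl fun x hx => ?_
  have : {i ∈ range e | i < f x} = range (f x) := by
    ext i
    simp only [mem_filter, mem_range]
    have := hf x hx
    omega
  rw [← card_filter, this, card_range]

noncomputable def closedBall {V : Type*} [Fintype V] (G : SimpleGraph V) (x : V) (i : ℕ) :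
    Finset V :=
  univ.filter (G.dist x · ≤ i)

namespace IsKConnected

variable {V : Type*} [Fintype V] {G : SimpleGraph V} {k : ℕ}

variable [DecidableEq V]

theorem le_card_sphere (hG : IsKConnected G k) {x y : V} {i : ℕ} (hi : 0 < i)
    (hiy : i < G.dist x y) : k ≤ #(sphere G x i) := by
  by_contra! hcard
  have hmem (z : V) : z ∈ ((sphere G x i : Set V)ᶜ) ↔ G.dist x z ≠ i := by simp [sphere]
  have hx := (hmem x).2 (by rw [dist_self]; omega)
  have hy := (hmem y).2 hiy.ne'
  obtain ⟨w⟩ := (hG.2 _ (by omega)).preconnected ⟨x, hx⟩ ⟨y, hy⟩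
  obtain ⟨z, hz, hzi⟩ := (w.map (Embedding.induce _).toHom).exists_mem_support_dist_eq_s3 x
    (by simp) hiy.le
  rw [Walk.support_map] at hz
  obtain ⟨⟨z, hz'⟩, -, rfl⟩ := List.mem_map.1 hz
  exact (hmem z).1 hz' hzi

theorem one_add_mul_le_card_closedBall (hG : IsKConnected G k) {x y : V} {i : ℕ}
    (hiy : i < G.dist x y) : 1 + k * i ≤ #(closedBall G x i) := by
  induction i with
  | zero => exact card_pos.2 ⟨x, by simp [closedBall]⟩
  | succ i ih =>
    have hunion : closedBall G x i ∪ sphere G x (i + 1) = closedBall G x (i + 1) := by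
      ext z; simp only [closedBall, sphere, mem_union, mem_filter, mem_univ, true_and]; omega
    have hdisj : Disjoint (closedBall G x i) (sphere G x (i + 1)) := by
      simp only [closedBall, sphere, disjoint_filter]; omega
    calc 1 + k * (i + 1) = (1 + k * i) + k := by ring
      _ ≤ #(closedBall G x i) + #(sphere G x (i + 1)) :=
        add_le_add (ih (by omega)) (hG.le_card_sphere (by omega) hiy)
      _ = #(closedBall G x (i + 1)) := by rw [← card_union_of_disjoint hdisj, hunion]

theorem card_filter_lt_dist_add_le_card (hG : IsKConnected G k) {x y : V} {i : ℕ}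
    (hiy : i < G.dist x y) : #{z | i < G.dist x z} + (1 + k * i) ≤ Fintype.card V := by
  have := hG.one_add_mul_le_card_closedBall hiy
  have hsplit := card_filter_add_card_filter_not (s := univ) (i < G.dist x ·)
  simp only [not_lt, card_univ] at hsplit
  rw [closedBall] at this
  omega

theorem mul_dist_pred_add_two_le_card (hk : 1 ≤ k) (hG : IsKConnected G k) (x y : V) :
    k * (G.dist x y - 1) + 2 ≤ Fintype.card V := by
  obtain h | h := Nat.eq_zero_or_pos (G.dist x y)
  · have := hG.1
    rw [h]
    omega
  · have hlt : G.dist x y - 1 < G.dist x y := by omega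
    have hfar := hG.card_filter_lt_dist_add_le_card hlt
    have : 0 < #{z | G.dist x y - 1 < G.dist x z} := card_pos.2 ⟨y, by simpa using hlt⟩
    omega

theorem two_mul_status_add_le (hG : IsKConnected G k) {x y : V}
    (hy : ∀ z, G.dist x z ≤ G.dist x y) :
    2 * status G x + k * (G.dist x y * (G.dist x y - 1)) + 2 * G.dist x y ≤
      2 * G.dist x y * Fintype.card V := by
  set d := G.dist x y
  have hlayers : status G x + ∑ i ∈ range d, (1 + k * i) ≤ d * Fintype.card V := by
    rw [status, sum_eq_sum_range_card_filter_lt univ _ fun z _ => hy z, ← sum_add_distrib]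
    calc _ ≤ ∑ _i ∈ range d, Fintype.card V :=
          sum_le_sum fun i hi => hG.card_filter_lt_dist_add_le_card (mem_range.1 hi)
      _ = d * Fintype.card V := by rw [sum_const, card_range, smul_eq_mul]
  rw [sum_add_distrib, ← mul_sum, sum_const, card_range, smul_eq_mul, mul_one] at hlayers
  rw [← sum_range_id_mul_two d]
  linarith

end IsKConnected

theorem mul_two_mul_sub_le_of_le {n k e t : ℕ} (het : e ≤ t) (hkt : k * t + 2 ≤ n + k) :
    (e : ℚ) * (2 * n - 2 - k * (e - 1)) ≤ t * (2 * n - 2 - k * (t - 1)) := by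
  obtain rfl | hlt := het.eq_or_lt
  · exact le_rfl
  have hkt' : (k : ℚ) * t + 2 ≤ n + k := by exact_mod_cast hkt
  have het' : (e : ℚ) + 1 ≤ t := by exact_mod_cast hlt
  have hke : (k : ℚ) * (e + 1) ≤ k * t := by gcongr
  -- the difference of the two sides is `(t - e) * (2 * n - 2 - k * (t + e - 1))`
  have hfactor : 0 ≤ ((t : ℚ) - e) * (2 * n - 2 - k * (t + e - 1)) :=
    mul_nonneg (by linarith) (by linarith)
  linarith

theorem cast_le_half_mul_of_two_mul_add_le {n k s e : ℕ} (hk : 1 ≤ k) (he : k * (e - 1) + 2 ≤ n)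
    (hs : 2 * s + k * (e * (e - 1)) + 2 * e ≤ 2 * e * n) :
    (s : ℚ) ≤ (1 / 2 : ℚ) * ((n + k - 2) / k : ℕ) *
      (2 * (n : ℚ) + (k : ℚ) - 2 - (k : ℚ) * ((n + k - 2) / k : ℕ)) := by
  set t := (n + k - 2) / k
  have het : e ≤ t := by
    rw [Nat.le_div_iff_mul_le (by omega), mul_comm]
    rw [Nat.mul_sub_one] at he
    omega
  have hkt : k * t + 2 ≤ n + k := by
    have : k * t ≤ n + k - 2 := Nat.mul_div_le _ _
    omega
  have hs' : 2 * (s : ℚ) ≤ e * (2 * n - 2 - k * (e - 1)) := by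
    obtain _ | e := e
    · have : s = 0 := by simpa using hs
      simp [this]
    · rw [Nat.add_sub_cancel] at hs
      have := (Nat.cast_le (α := ℚ)).2 hs
      push_cast at this ⊢
      linarith
  have := mul_two_mul_sub_le_of_le het hkt
  linarith


theorem status_le_of_kConnected_general (n k : ℕ) (hk : 1 ≤ k)
    (G : SimpleGraph (Fin n)) (hG : IsKConnected G k) (x : Fin n) :
    (status G x : ℚ) ≤ (1 / 2 : ℚ) * ((n + k - 2) / k : ℕ) *
      (2 * (n : ℚ) + (k : ℚ) - 2 - (k : ℚ) * ((n + k - 2) / k : ℕ)) := by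
  obtain ⟨y, -, hy⟩ := exists_max_image univ (G.dist x) ⟨x, mem_univ x⟩
  have hstatus := hG.two_mul_status_add_le fun z => hy z (mem_univ z)
  have hdist := hG.mul_dist_pred_add_two_le_card hk x y
  rw [Fintype.card_fin] at hstatus hdist
  exact cast_le_half_mul_of_two_mul_add_le hk hdist hstatus

/-- In a `k`-connected graph of order `n` with `n - 1 > k ≥ 1`, every vertex `x`
satisfies `W(x,G) ≤ (1/2)·⌊(n+k-2)/k⌋·(2n+k-2-k·⌊(n+k-2)/k⌋)`. -/
theorem status_le_of_kConnected (n k : ℕ) (hk : 1 ≤ k) (hn : k < n - 1)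
    (G : SimpleGraph (Fin n)) (hG : IsKConnected G k) (x : Fin n) :
    (status G x : ℚ) ≤ (1 / 2 : ℚ) * ((n + k - 2) / k : ℕ) *
      (2 * (n : ℚ) + (k : ℚ) - 2 - (k : ℚ) * ((n + k - 2) / k : ℕ)) :=
  status_le_of_kConnected_general n k hk G hG x
end

section
/- Let n - 1 > k ≥ 2 with k even. In the Harary graph H_{k,n}, every vertex x satisfies |N(x,i)| = k for all 1 ≤ i ≤ ecc(x) - 1. -/
open Finset SimpleGraph

/-! Put `r = k / 2`. Each edge moves a vertex by at most `r` around the cycle, and moving `r`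
positions at a time in the shorter direction is a walk, so `dist x y = ⌈c(x, y) / r⌉` for the
circular distance `c`. Hence `N(x, j + 1)` consists of the `y` with `r j < c(x, y) ≤ r (j + 1)`:
`r` vertices on each side of `x`, provided `r (j + 1) < ⌊n / 2⌋`, which is what
`j + 1 < ecc x = ⌈⌊n / 2⌋ / r⌉` says. -/

lemma Nat.ceilDiv_eq_add_one_iff {r : ℕ} (hr : 0 < r) (c j : ℕ) :
    c ⌈/⌉ r = j + 1 ↔ c ∈ Ioc (r * j) (r * (j + 1)) := by
  rw [mem_Ioc, le_antisymm_iff, ceilDiv_le_iff_le_mul hr, Nat.add_one_le_iff, ← not_le,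
    ceilDiv_le_iff_le_mul hr, not_le, and_comm]

section CircDist

variable {n : ℕ}

lemma circDist_eq_min_val_sub (x y : Fin n) : circDist n x y = min (x - y).val (y - x).val := by
  have := x.isLt
  have := y.isLt
  unfold circDist
  rw [Fin.val_sub, Fin.val_sub]
  congr 2 <;> omega

lemma circDist_eq_min_val_sub_tsub (x y : Fin n) :
    circDist n x y = min (y - x).val (n - (y - x).val) := by
  have : NeZero n := NeZero.of_pos x.pos
  rw [circDist_eq_min_val_sub, ← neg_sub y x, Fin.val_neg]
  split_ifs with h
  · simp [h]
  · exact min_comm _ _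

lemma circDist_triangle (x y z : Fin n) :
    circDist n x z ≤ circDist n x y + circDist n y z := by
  have : NeZero n := NeZero.of_pos x.pos
  have hxz : z - x = (y - x) + (z - y) := (sub_add_sub_cancel' y x z).symm
  have := (y - x).isLt
  have := (z - y).isLt
  simp only [circDist_eq_min_val_sub_tsub, hxz, Fin.val_add_eq_ite]
  split_ifs <;> omega

lemma circDist_le_half (x y : Fin n) : circDist n x y ≤ n / 2 := by
  rw [circDist_eq_min_val_sub_tsub]
  omega

lemma card_filter_circDist_mem_Ioc (x : Fin n) {a b : ℕ} (hab : a ≤ b) (hb : 2 * b < n) :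
    #{y | circDist n x y ∈ Ioc a b} = 2 * (b - a) := by
  have : NeZero n := NeZero.of_pos x.pos
  calc #{y | circDist n x y ∈ Ioc a b}
      = #{d : Fin n | min d.val (n - d.val) ∈ Ioc a b} :=
        card_equiv (Equiv.subRight x) fun y => by simp [circDist_eq_min_val_sub_tsub]
    _ = #{m ∈ range n | min m (n - m) ∈ Ioc a b} := by
        rw [← Nat.Iio_eq_range, ← Fin.map_valEmbedding_univ, filter_map, card_map]
        rfl
    _ = #(Ioc a b ∪ Ico (n - b) (n - a)) := by
        congr 1
        ext m
        simp only [mem_filter, mem_range, mem_union, mem_Ioc, mem_Ico]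
        omega
    _ = 2 * (b - a) := by
        rw [card_union_of_disjoint, Nat.card_Ioc, Nat.card_Ico]
        · omega
        · rw [Finset.disjoint_left]
          intro m hm1 hm2
          simp only [mem_Ioc, mem_Ico] at hm1 hm2
          omega

end CircDist

section HararyEven

variable {k n : ℕ}

lemma circDist_le_mul_length {x y : Fin n} (W : (hararyEven k n).Walk x y) :
    circDist n x y ≤ k / 2 * W.length := by
  induction W with
  | nil => simp [circDist]
  | @cons u v w hadj W ih =>
    calc circDist n u w ≤ circDist n u v + circDist n v w := circDist_triangle u v w
      _ ≤ k / 2 + k / 2 * W.length := Nat.add_le_add hadj.2 ih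
      _ = k / 2 * (W.length + 1) := by ring

lemma hararyEven_edist_add_le_one {t : Fin n} (ht : t.val ≤ k / 2) (u : Fin n) :
    (hararyEven k n).edist u (u + t) ≤ 1 := by
  have : NeZero n := NeZero.of_pos u.pos
  rw [edist_le_one_iff_adj_or_eq, or_iff_not_imp_right]
  refine fun hne => ⟨hne, ?_⟩
  rw [circDist_eq_min_val_sub_tsub, add_sub_cancel_left]
  exact (min_le_left _ _).trans ht

lemma hararyEven_edist_add_le (hk : 2 ≤ k) (x s : Fin n) :
    (hararyEven k n).edist x (x + s) ≤ (s.val ⌈/⌉ (k / 2) : ℕ) := by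
  have : NeZero n := NeZero.of_pos x.pos
  suffices h : ∀ (q : ℕ) (s : Fin n), s.val ≤ k / 2 * q → (hararyEven k n).edist x (x + s) ≤ q from
    h _ s ((ceilDiv_le_iff_le_mul (by omega)).1 le_rfl)
  intro q
  induction q with
  | zero =>
    intro s hs
    obtain rfl : s = 0 := Fin.ext (by simpa using hs)
    simp
  | succ q ih =>
    intro s hs
    let t : Fin n := ⟨min s.val (k / 2), by omega⟩
    let s' : Fin n := ⟨s.val - min s.val (k / 2), by omega⟩
    have hs' : s = s' + t := Fin.ext <| by
      rw [Fin.val_add, Nat.sub_add_cancel (min_le_left _ _), Nat.mod_eq_of_lt s.isLt]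
    calc (hararyEven k n).edist x (x + s)
        ≤ (hararyEven k n).edist x (x + s') + (hararyEven k n).edist (x + s') (x + s' + t) := by
          rw [hs', ← add_assoc]
          exact SimpleGraph.edist_triangle
      _ ≤ q + 1 := add_le_add (ih s' (by simp only [s']; rw [mul_add] at hs; omega))
          (hararyEven_edist_add_le_one (min_le_right _ _) _)
      _ = (q + 1 : ℕ) := by push_cast; rfl

lemma hararyEven_edist (hk : 2 ≤ k) (x y : Fin n) :
    (hararyEven k n).edist x y = (circDist n x y ⌈/⌉ (k / 2) : ℕ) := by
  have : NeZero n := NeZero.of_pos x.pos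
  have hr : 0 < k / 2 := by omega
  have hle : (hararyEven k n).edist x y ≤ (circDist n x y ⌈/⌉ (k / 2) : ℕ) := by
    have hxy := hararyEven_edist_add_le hk x (y - x)
    have hyx := hararyEven_edist_add_le hk y (x - y)
    rw [add_sub_cancel] at hxy hyx
    rw [edist_comm] at hyx
    rw [circDist_eq_min_val_sub, (gc_mul_ceilDiv hr).monotone_l.map_min, Nat.mono_cast.map_min]
    exact le_min hyx hxy
  refine le_antisymm hle ?_
  have hreach : (hararyEven k n).Reachable x y :=
    reachable_of_edist_ne_top (ne_top_of_le_ne_top (by simp) hle)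
  obtain ⟨W, hW⟩ := hreach.exists_walk_length_eq_edist
  rw [← hW, Nat.cast_le, ceilDiv_le_iff_le_mul hr]
  exact circDist_le_mul_length W

lemma hararyEven_dist (hk : 2 ≤ k) (x y : Fin n) :
    (hararyEven k n).dist x y = circDist n x y ⌈/⌉ (k / 2) := by
  rw [SimpleGraph.dist, hararyEven_edist hk, ENat.toNat_natCast]

lemma ecc_hararyEven_le (hk : 2 ≤ k) (x : Fin n) :
    ecc (hararyEven k n) x ≤ n / 2 ⌈/⌉ (k / 2) :=
  Finset.sup_le fun y _ => by
    rw [hararyEven_dist hk]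
    exact (gc_mul_ceilDiv (by omega)).monotone_l (circDist_le_half x y)

lemma sphere_hararyEven_add_one (hk : 2 ≤ k) (x : Fin n) (j : ℕ) :
    sphere (hararyEven k n) x (j + 1) =
      ({y | circDist n x y ∈ Ioc (k / 2 * j) (k / 2 * (j + 1))} : Finset (Fin n)) := by
  simp only [sphere, hararyEven_dist hk, Nat.ceilDiv_eq_add_one_iff (show 0 < k / 2 by omega)]

end HararyEven

theorem hararyEven_sphere_card_general (k n : ℕ) (hk : 2 ≤ k) (hke : Even k)
    (x : Fin n) (i : ℕ) (hi1 : 1 ≤ i) (hi2 : i ≤ ecc (hararyEven k n) x - 1) :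
    (sphere (hararyEven k n) x i).card = k := by
  obtain ⟨j, rfl⟩ := Nat.exists_eq_add_of_le' hi1
  have hecc : j + 2 ≤ n / 2 ⌈/⌉ (k / 2) := by
    have := ecc_hararyEven_le hk x
    omega
  have hjn : k / 2 * (j + 1) < n / 2 := by
    rw [← not_le, ← ceilDiv_le_iff_le_mul (by omega)]
    omega
  rw [sphere_hararyEven_add_one hk, card_filter_circDist_mem_Ioc x (by gcongr; omega) (by omega),
    mul_add_one, Nat.add_sub_cancel_left, Nat.two_mul_div_two_of_even hke]

/-- For `k` even, `n - 1 > k ≥ 2`, every vertex `x` of the Harary graph `H_{k,n}`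
satisfies `|N(x,i)| = k` for all `1 ≤ i ≤ ecc(x) - 1`. -/
theorem hararyEven_sphere_card (k n : ℕ) (hk : 2 ≤ k) (hke : Even k) (hn : k < n - 1)
    (x : Fin n) (i : ℕ) (hi1 : 1 ≤ i) (hi2 : i ≤ ecc (hararyEven k n) x - 1) :
    (sphere (hararyEven k n) x i).card = k :=
  hararyEven_sphere_card_general k n hk hke x i hi1 hi2
end

section
/- Let G be a 2-connected graph of order n ≥ 4. Then W(G) ≤ (1/4)·n·⌊n/2⌋·(2n - 2⌊n/2⌋), and equality holds when G is the cycle C_n, i.e., W(C_n) = (1/4)·n·⌊n/2⌋·(2n - 2⌊n/2⌋) = n·⌊n/2⌋·⌈n/2⌉/2. -/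
open Finset SimpleGraph

private lemma key_min (n t s t' s' : ℕ) (hn : 2 ≤ n) (ht : t < n) (hs : s < n)
    (ht' : t' < n) (hs' : s' < n) (hts : t + s = 0 ∨ t + s = n)
    (hts' : t' + s' = 0 ∨ t' + s' = n) (hrel : t' = (t + (n - 1)) % n) :
    min t s ≤ min t' s' + 1 ∧ min t' s' ≤ min t s + 1 := by
  rcases Nat.eq_zero_or_pos t with h0 | h1
  · subst h0
    rw [Nat.mod_eq_of_lt (by omega)] at hrel
    omega
  · have h2 : t + (n - 1) = n + (t - 1) := by omega
    rw [h2, Nat.add_mod_left, Nat.mod_eq_of_lt (by omega)] at hrel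
    omega

private lemma sum_lin : ∀ (m n : ℕ), 2 * m ≤ n →
    ∑ i ∈ Finset.range m, (n - 1 - 2 * i) = m * (n - m) := by
  intro m
  induction m with
  | zero => simp
  | succ m ih =>
    intro n hmn
    rw [Finset.sum_range_succ, ih n (by omega)]
    have ha : n - m = (n - m - 1) + 1 := by omega
    set a := n - m - 1 with hadef
    have h1 : m + (n - 1 - 2 * m) = a := by omega
    have h2 : n - (m + 1) = a := by omega
    calc m * (n - m) + (n - 1 - 2 * m) = m * a + (m + (n - 1 - 2 * m)) := by rw [ha]; ring
      _ = (m + 1) * (n - (m + 1)) := by rw [h1, h2]; ring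

private lemma sum_min_eq (n : ℕ) :
    ∑ k ∈ Finset.range n, min k (n - k) = ∑ i ∈ Finset.range (n / 2), (n - 1 - 2 * i) := by
  have h1 : ∀ k ∈ Finset.range n, min k (n - k)
      = ∑ i ∈ Finset.range (n / 2), (if i < k ∧ i < n - k then 1 else 0) := by
    intro k hk
    rw [← Finset.card_filter]
    have : (Finset.range (n / 2)).filter (fun i => i < k ∧ i < n - k)
        = Finset.range (min k (n - k)) := by
      ext i
      simp only [Finset.mem_filter, Finset.mem_range] at *
      omega
    rw [this, Finset.card_range]
  rw [Finset.sum_congr rfl h1, Finset.sum_comm]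
  refine Finset.sum_congr rfl fun i hi => ?_
  rw [← Finset.card_filter]
  have : (Finset.range n).filter (fun k => i < k ∧ i < n - k) = Finset.Ico (i + 1) (n - i) := by
    ext k
    simp only [Finset.mem_filter, Finset.mem_range, Finset.mem_Ico]
    omega
  rw [this, Nat.card_Ico]
  simp only [Finset.mem_range] at hi
  omega

open Fin.CommRing in
private lemma fin_sub_val_add {n : ℕ} (hn : 2 ≤ n) (a c : Fin n) :
    (c - a).val + (a - c).val = 0 ∨ (c - a).val + (a - c).val = n := by
  haveI : NeZero n := ⟨by omega⟩
  have h0 : ((c - a) + (a - c)) = 0 := by ring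
  have h1 : ((c - a).val + (a - c).val) % n = 0 := by
    rw [← Fin.val_add, h0]; rfl
  obtain ⟨q, hq⟩ := Nat.dvd_of_mod_eq_zero h1
  have hc : (c - a).val < n := (c - a).isLt
  have ha : (a - c).val < n := (a - c).isLt
  have hq2 : q < 2 := by
    by_contra hq2
    push_neg at hq2
    have : n * 2 ≤ n * q := Nat.mul_le_mul_left n hq2
    omega
  interval_cases q <;> omega

private lemma fin_shift_val {n : ℕ} [NeZero n] (hn : 2 ≤ n) (z : Fin n) :
    (z - 1).val = (z.val + (n - 1)) % n := by
  have h1 : (1 : Fin n).val = 1 := by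
    rw [Fin.val_one']; exact Nat.mod_eq_of_lt (by omega)
  rw [Fin.sub_def]
  show (n - (1 : Fin n).val + z.val) % n = _
  rw [h1, Nat.add_comm]

open Fin.CommRing in
private lemma cd_lip {n : ℕ} (hn : 2 ≤ n) {x b : Fin n} (h : (SimpleGraph.cycleGraph n).Adj x b)
    (y : Fin n) :
    min ((y - x).val) ((x - y).val) ≤ min ((y - b).val) ((b - y).val) + 1 := by
  haveI : NeZero n := ⟨by omega⟩
  have h1 : (1 : Fin n).val = 1 := by
    rw [Fin.val_one']; exact Nat.mod_eq_of_lt (by omega)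
  rw [SimpleGraph.cycleGraph_adj'] at h
  rcases h with h | h
  · have hx : x = b + 1 := by
      have h2 : x - b = 1 := Fin.ext (by rw [h1]; exact h)
      have h3 := congrArg (· + b) h2
      simpa [sub_add_cancel, add_comm] using h3
    subst hx
    have hrel : (y - (b + 1)).val = ((y - b).val + (n - 1)) % n := by
      have h4 : y - (b + 1) = (y - b) - 1 := by ring
      rw [h4, fin_shift_val hn]
    exact (key_min n ((y - b).val) ((b - y).val) ((y - (b+1)).val) (((b+1) - y).val)
      hn (y - b).isLt (b - y).isLt (y - (b+1)).isLt ((b+1) - y).isLt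
      (fin_sub_val_add hn b y) (fin_sub_val_add hn (b+1) y) hrel).2
  · have hb : b = x + 1 := by
      have h2 : b - x = 1 := Fin.ext (by rw [h1]; exact h)
      have h3 := congrArg (· + x) h2
      simpa [sub_add_cancel, add_comm] using h3
    subst hb
    have hrel : (y - (x + 1)).val = ((y - x).val + (n - 1)) % n := by
      have h4 : y - (x + 1) = (y - x) - 1 := by ring
      rw [h4, fin_shift_val hn]
    exact (key_min n ((y - x).val) ((x - y).val) ((y - (x+1)).val) (((x+1) - y).val)
      hn (y - x).isLt (x - y).isLt (y - (x+1)).isLt ((x+1) - y).isLt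
      (fin_sub_val_add hn x y) (fin_sub_val_add hn (x+1) y) hrel).1

private lemma cd_le_walk {n : ℕ} (hn : 2 ≤ n) {x y : Fin n}
    (p : (SimpleGraph.cycleGraph n).Walk x y) :
    min ((y - x).val) ((x - y).val) ≤ p.length := by
  haveI : NeZero n := ⟨by omega⟩
  induction p with
  | nil => rw [sub_self]; simp
  | @cons a c d hac q ih =>
    rw [SimpleGraph.Walk.length_cons]
    have h2 := cd_lip hn hac d
    omega

open Fin.CommRing in
private lemma cycle_dist_le_nat {n : ℕ} [NeZero n] (hn : 2 ≤ n)
    (hconn : (SimpleGraph.cycleGraph n).Connected)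
    (x : Fin n) (k : ℕ) : (SimpleGraph.cycleGraph n).dist x (x + (k : Fin n)) ≤ k := by
  induction k with
  | zero => simp
  | succ k ih =>
    have h1v : (1 : Fin n).val = 1 := by
      rw [Fin.val_one']; exact Nat.mod_eq_of_lt (by omega)
    have hadj : (SimpleGraph.cycleGraph n).Adj (x + (k : Fin n)) (x + ((k + 1 : ℕ) : Fin n)) := by
      rw [SimpleGraph.cycleGraph_adj']
      right
      have hc : ((k + 1 : ℕ) : Fin n) = (k : Fin n) + 1 := by push_cast; ring
      rw [hc]
      have h2 : (x + ((k : Fin n) + 1)) - (x + (k : Fin n)) = 1 := by ring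
      rw [h2, h1v]
    have hd1 := SimpleGraph.dist_eq_one_iff_adj.mpr hadj
    have htri := hconn.dist_triangle (u := x) (v := x + (k : Fin n))
      (w := x + ((k + 1 : ℕ) : Fin n))
    omega

open Fin.CommRing in
private lemma cycle_dist_eq {n : ℕ} (hn : 2 ≤ n)
    (hconn : (SimpleGraph.cycleGraph n).Connected) (x y : Fin n) :
    (SimpleGraph.cycleGraph n).dist x y = min ((y - x).val) ((x - y).val) := by
  haveI : NeZero n := ⟨by omega⟩
  apply le_antisymm
  · apply le_min
    · have hy : x + (((y - x).val : ℕ) : Fin n) = y := by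
        rw [Fin.cast_val_eq_self]; ring
      conv_lhs => rw [← hy]
      exact cycle_dist_le_nat hn hconn x _
    · rw [SimpleGraph.dist_comm]
      have hy : y + (((x - y).val : ℕ) : Fin n) = x := by
        rw [Fin.cast_val_eq_self]; ring
      conv_lhs => rw [← hy]
      exact cycle_dist_le_nat hn hconn y _
  · obtain ⟨p, hp⟩ := hconn.exists_walk_length_eq_dist x y
    rw [← hp]
    exact cd_le_walk hn p

private lemma ivt {V : Type*} {G : SimpleGraph V} (hc : G.Connected) (x : V) (i : ℕ) :
    ∀ {a b : V} (p : G.Walk a b), G.dist x a ≤ i → i < G.dist x b →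
      ∃ u ∈ p.support, G.dist x u = i := by
  intro a b p
  induction p with
  | nil =>
    intro h1 h2
    omega
  | @cons a c b h q ih =>
    intro h1 h2
    by_cases hai : G.dist x a = i
    · exact ⟨a, by simp, hai⟩
    · have hlt : G.dist x a < i := lt_of_le_of_ne h1 hai
      have hd : G.dist a c = 1 := SimpleGraph.dist_eq_one_iff_adj.mpr h
      have htri := hc.dist_triangle (u := x) (v := a) (w := c)
      obtain ⟨u, hu, hud⟩ := ih (by omega) h2
      exact ⟨u, by simp [hu], hud⟩

private lemma connected_of_two {V : Type*} [Fintype V] {G : SimpleGraph V}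
    (hG : IsKConnected G 2) : G.Connected := by
  have h := hG.2 ∅ (by simp)
  have he : ((↑(∅ : Finset V) : Set V))ᶜ = Set.univ := by simp
  rw [he] at h
  exact (G.induceUnivIso).connected_iff.mp h

private lemma sphere_two_le {V : Type*} [Fintype V] [DecidableEq V] {G : SimpleGraph V}
    (hG : IsKConnected G 2) (hconn : G.Connected) (x : V) {i : ℕ} (hi : 1 ≤ i)
    (hie : i < ecc G x) : 2 ≤ (sphere G x i).card := by
  have hne : (Finset.univ : Finset V).Nonempty := ⟨x, Finset.mem_univ x⟩
  obtain ⟨w, -, hw⟩ := Finset.exists_mem_eq_sup Finset.univ hne (fun y => G.dist x y)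
  rw [ecc] at hie
  rw [hw] at hie
  obtain ⟨p0, -⟩ := hconn.exists_walk_length_eq_dist x w
  obtain ⟨u0, -, hu0⟩ := ivt hconn x i p0 (by simp [SimpleGraph.dist_self]) hie
  by_contra hcard
  push_neg at hcard
  have huniq := Finset.card_le_one.mp (by omega : (sphere G x i).card ≤ 1)
  -- every vertex at distance i equals u0
  have huu : ∀ u : V, G.dist x u = i → u = u0 := by
    intro u hu
    exact huniq u (by simp [sphere, hu]) u0 (by simp [sphere, hu0])
  have hxne : x ≠ u0 := fun hx => by
    rw [← hx] at hu0; rw [SimpleGraph.dist_self] at hu0; omega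
  have hwne : w ≠ u0 := fun hx => by
    rw [hx, hu0] at hie; omega
  have hind := hG.2 {u0} (by simp)
  set s : Set V := (↑({u0} : Finset V) : Set V)ᶜ with hs
  have hxs : x ∈ s := by simp [hs, hxne]
  have hws : w ∈ s := by simp [hs, hwne]
  obtain ⟨q⟩ := hind ⟨x, hxs⟩ ⟨w, hws⟩
  let f := SimpleGraph.Embedding.induce s (G := G)
  have hp : (q.map f.toHom : G.Walk x w) = q.map f.toHom := rfl
  obtain ⟨u, hu, hud⟩ := ivt hconn x i (q.map f.toHom)
    (by rw [show f.toHom ⟨x, hxs⟩ = x from rfl, SimpleGraph.dist_self]; omega) hie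
  rw [SimpleGraph.Walk.support_map, List.mem_map] at hu
  obtain ⟨z, -, hz⟩ := hu
  have hzu : (z : V) = u := hz
  have hus : u ∈ s := hzu ▸ z.2
  rw [hs] at hus
  simp only [Finset.coe_singleton, Set.mem_compl_iff, Set.mem_singleton_iff] at hus
  exact hus (huu u hud)

private lemma sum_ite01 (i : ℕ) :
    ∑ j ∈ Finset.range (i + 1), (if j = 0 then 1 else 2) = 1 + 2 * i := by
  induction i with
  | zero => simp
  | succ i ih => rw [Finset.sum_range_succ, ih]; simp; omega

private lemma status_le {n : ℕ} (hn : 4 ≤ n) (G : SimpleGraph (Fin n)) (hG : IsKConnected G 2)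
    (x : Fin n) : status G x ≤ (n / 2) * ((n + 1) / 2) := by
  classical
  have hconn := connected_of_two hG
  have hde : ∀ y, G.dist x y ≤ ecc G x := fun y => Finset.le_sup (Finset.mem_univ y)
  have hdisj : ∀ i : ℕ, ∀ T : Finset (Fin n), (∀ y ∈ T, i < G.dist x y) →
      T.card + ((Finset.range (i+1)).biUnion (fun j => sphere G x j)).card ≤ n := by
    intro i T hT
    have hd : Disjoint T ((Finset.range (i+1)).biUnion (fun j => sphere G x j)) := by
      rw [Finset.disjoint_left]
      intro y hy hy2
      rw [Finset.mem_biUnion] at hy2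
      obtain ⟨j, hj, hjy⟩ := hy2
      simp only [sphere, Finset.mem_filter] at hjy
      rw [Finset.mem_range] at hj
      have := hT y hy
      omega
    calc T.card + ((Finset.range (i+1)).biUnion (fun j => sphere G x j)).card
        = (T ∪ (Finset.range (i+1)).biUnion (fun j => sphere G x j)).card :=
          (Finset.card_union_of_disjoint hd).symm
      _ ≤ (Finset.univ : Finset (Fin n)).card := Finset.card_le_card (Finset.subset_univ _)
      _ = n := by simp
  have hBcard : ∀ i : ℕ, i < ecc G x →
      1 + 2*i ≤ ((Finset.range (i+1)).biUnion (fun j => sphere G x j)).card := by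
    intro i hie
    rw [Finset.card_biUnion]
    · have hterm : ∀ j ∈ Finset.range (i+1), (if j = 0 then 1 else 2) ≤ (sphere G x j).card := by
        intro j hj
        rw [Finset.mem_range] at hj
        by_cases hj0 : j = 0
        · subst hj0
          rw [if_pos rfl]
          refine Finset.card_pos.mpr ⟨x, ?_⟩
          simp [sphere, SimpleGraph.dist_self]
        · rw [if_neg hj0]
          exact sphere_two_le hG hconn x (by omega) (by omega)
      rw [← sum_ite01 i]
      exact Finset.sum_le_sum hterm
    · intro j hj j' hj' hjj'
      rw [Function.onFun, Finset.disjoint_left]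
      intro y hy hy'
      simp only [sphere, Finset.mem_filter] at hy hy'
      exact hjj' (by omega)
  have hT : ∀ i : ℕ, i < ecc G x →
      ((Finset.univ.filter (fun y => i < G.dist x y)).card + (1 + 2*i) ≤ n) := by
    intro i hie
    have h1 := hdisj i (Finset.univ.filter (fun y => i < G.dist x y))
      (fun y hy => (Finset.mem_filter.mp hy).2)
    have h2 := hBcard i hie
    omega
  have he2 : 2 * ecc G x ≤ n := by
    rcases Nat.eq_zero_or_pos (ecc G x) with h0 | h1
    · omega
    · obtain ⟨w, -, hw⟩ := Finset.exists_mem_eq_sup Finset.univ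
        ⟨x, Finset.mem_univ x⟩ (fun y => G.dist x y)
      have hwe : G.dist x w = ecc G x := hw.symm
      have hwT : w ∈ Finset.univ.filter (fun y => (ecc G x - 1) < G.dist x y) := by
        rw [Finset.mem_filter]
        exact ⟨Finset.mem_univ w, by omega⟩
      have hcard1 : 1 ≤ (Finset.univ.filter (fun y => (ecc G x - 1) < G.dist x y)).card :=
        Finset.card_pos.mpr ⟨w, hwT⟩
      have := hT (ecc G x - 1) (by omega)
      omega
  have hstat : status G x
      = ∑ i ∈ Finset.range (n/2), (Finset.univ.filter (fun y => i < G.dist x y)).card := by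
    rw [status]
    have h4 : ∀ y : Fin n, G.dist x y
        = ∑ i ∈ Finset.range (n/2), (if i < G.dist x y then 1 else 0) := by
      intro y
      rw [← Finset.card_filter]
      have hdy : G.dist x y ≤ n/2 := by have := hde y; omega
      have hfe : (Finset.range (n/2)).filter (fun i => i < G.dist x y)
          = Finset.range (G.dist x y) := by
        ext j
        simp only [Finset.mem_filter, Finset.mem_range]
        omega
      rw [hfe, Finset.card_range]
    calc ∑ y, G.dist x y
        = ∑ y, ∑ i ∈ Finset.range (n/2), (if i < G.dist x y then 1 else 0) :=
          Finset.sum_congr rfl (fun y _ => h4 y)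
      _ = ∑ i ∈ Finset.range (n/2), ∑ y, (if i < G.dist x y then 1 else 0) := Finset.sum_comm
      _ = _ := Finset.sum_congr rfl (fun i _ => (Finset.card_filter _ _).symm)
  rw [hstat]
  calc ∑ i ∈ Finset.range (n/2), (Finset.univ.filter (fun y => i < G.dist x y)).card
      ≤ ∑ i ∈ Finset.range (n/2), (n - 1 - 2*i) := by
        apply Finset.sum_le_sum
        intro i _
        by_cases hie : i < ecc G x
        · have := hT i hie; omega
        · have hempty : Finset.univ.filter (fun y => i < G.dist x y) = ∅ := by
            apply Finset.filter_eq_empty_iff.mpr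
            intro y _
            have := hde y
            omega
          rw [hempty]
          simp
    _ = (n/2) * (n - n/2) := sum_lin _ _ (by omega)
    _ = (n/2) * ((n+1)/2) := by congr 1; omega

open Fin.CommRing in
private lemma status_cycle {n : ℕ} (hn : 4 ≤ n) (x : Fin n) :
    status (SimpleGraph.cycleGraph n) x = (n / 2) * ((n + 1) / 2) := by
  haveI : NeZero n := ⟨by omega⟩
  have hconn : (SimpleGraph.cycleGraph n).Connected := by
    obtain ⟨m, rfl⟩ : ∃ m, n = m + 1 := ⟨n - 1, by omega⟩
    exact SimpleGraph.cycleGraph_connected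
  rw [status]
  rw [Finset.sum_congr rfl (fun y _ => cycle_dist_eq (by omega) hconn x y)]
  have h2 : ∑ z : Fin n, min (z.val) ((-z).val)
      = ∑ y : Fin n, min ((y - x).val) ((x - y).val) := by
    apply Fintype.sum_bijective (fun z => z + x) (Equiv.addRight x).bijective
    intro z
    have e1 : z + x - x = z := by ring
    have e2 : x - (z + x) = -z := by ring
    rw [e1, e2]
  rw [← h2]
  have h3 : ∀ z : Fin n, min z.val ((-z).val) = min z.val ((n - z.val) % n) := by
    intro z
    rw [Fin.neg_def]
  rw [Finset.sum_congr rfl (fun z _ => h3 z)]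
  rw [Fin.sum_univ_eq_sum_range (fun k => min k ((n - k) % n)) n]
  have h4 : ∀ k ∈ Finset.range n, min k ((n - k) % n) = min k (n - k) := by
    intro k hk
    rw [Finset.mem_range] at hk
    by_cases h0 : k = 0
    · subst h0
      rw [Nat.zero_min, Nat.zero_min]
    · rw [Nat.mod_eq_of_lt (by omega)]
  rw [Finset.sum_congr rfl h4, sum_min_eq, sum_lin _ _ (by omega)]
  congr 1
  omega

private lemma wiener_eq {n : ℕ} (G : SimpleGraph (Fin n)) :
    wiener G = (∑ x : Fin n, (status G x : ℚ)) / 2 := by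
  rw [wiener]
  congr 1
  have h1 : ∑ p ∈ Finset.univ.offDiag, (G.dist p.1 p.2 : ℚ)
      = ∑ p : Fin n × Fin n, (G.dist p.1 p.2 : ℚ) := by
    apply Finset.sum_subset (Finset.subset_univ _)
    intro p _ hp
    have hpp : p.1 = p.2 := by
      by_contra hne
      exact hp (Finset.mem_offDiag.mpr ⟨Finset.mem_univ _, Finset.mem_univ _, hne⟩)
    rw [hpp, SimpleGraph.dist_self]
    norm_num
  rw [h1, Fintype.sum_prod_type]
  apply Finset.sum_congr rfl
  intro x _
  rw [status]
  push_cast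
  rfl

/-- A `2`-connected graph of order `n ≥ 4` satisfies
`W(G) ≤ (n/4)·⌊n/2⌋·(2n - 2⌊n/2⌋)`, with equality for the cycle `C_n`:
`W(C_n) = (1/4)·n·⌊n/2⌋·(2n - 2⌊n/2⌋) = n·⌊n/2⌋·⌈n/2⌉/2`. -/
theorem wiener_le_two_connected (n : ℕ) (hn : 4 ≤ n)
    (G : SimpleGraph (Fin n)) (hG : IsKConnected G 2) :
    wiener G ≤ ((n : ℚ) / 4) * (n / 2 : ℕ) * (2 * (n : ℚ) - 2 * (n / 2 : ℕ)) ∧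
    wiener (SimpleGraph.cycleGraph n) =
      (1 / 4 : ℚ) * (n : ℚ) * (n / 2 : ℕ) * (2 * (n : ℚ) - 2 * (n / 2 : ℕ)) ∧
    (1 / 4 : ℚ) * (n : ℚ) * (n / 2 : ℕ) * (2 * (n : ℚ) - 2 * (n / 2 : ℕ)) =
      (n : ℚ) * (n / 2 : ℕ) * ((n + 1) / 2 : ℕ) / 2 := by
  have hcastn : (n / 2 : ℕ) + ((n + 1) / 2 : ℕ) = n := by omega
  have hcast : ((n / 2 : ℕ) : ℚ) + (((n + 1) / 2 : ℕ) : ℚ) = (n : ℚ) := by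
    exact_mod_cast congrArg (Nat.cast : ℕ → ℚ) hcastn
  refine ⟨?_, ?_, ?_⟩
  · rw [wiener_eq]
    have hb : ∀ x : Fin n, (status G x : ℚ) ≤ (((n / 2) * ((n + 1) / 2) : ℕ) : ℚ) := by
      intro x
      exact_mod_cast status_le hn G hG x
    have hsum : ∑ x : Fin n, (status G x : ℚ)
        ≤ (n : ℚ) * (((n / 2) * ((n + 1) / 2) : ℕ) : ℚ) := by
      calc ∑ x : Fin n, (status G x : ℚ)
          ≤ ∑ _x : Fin n, (((n / 2) * ((n + 1) / 2) : ℕ) : ℚ) :=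
            Finset.sum_le_sum (fun x _ => hb x)
        _ = (n : ℚ) * (((n / 2) * ((n + 1) / 2) : ℕ) : ℚ) := by
            rw [Finset.sum_const, Finset.card_univ, Fintype.card_fin, nsmul_eq_mul]
    have heq : (n : ℚ) * (((n / 2) * ((n + 1) / 2) : ℕ) : ℚ) / 2
        = ((n : ℚ) / 4) * ((n / 2 : ℕ) : ℚ) * (2 * (n : ℚ) - 2 * ((n / 2 : ℕ) : ℚ)) := by
      push_cast
      linear_combination ((n : ℚ) * ((n / 2 : ℕ) : ℚ) / 2) * hcast
    rw [← heq]
    linarith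
  · rw [wiener_eq]
    have hsum : ∑ x : Fin n, (status (SimpleGraph.cycleGraph n) x : ℚ)
        = (n : ℚ) * (((n / 2) * ((n + 1) / 2) : ℕ) : ℚ) := by
      have h1 : ∀ x : Fin n, (status (SimpleGraph.cycleGraph n) x : ℚ)
          = (((n / 2) * ((n + 1) / 2) : ℕ) : ℚ) := by
        intro x
        exact_mod_cast congrArg (Nat.cast : ℕ → ℚ) (status_cycle hn x)
      rw [Finset.sum_congr rfl (fun x _ => h1 x), Finset.sum_const, Finset.card_univ,
        Fintype.card_fin, nsmul_eq_mul]
    rw [hsum]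
    push_cast
    linear_combination ((n : ℚ) * ((n / 2 : ℕ) : ℚ) / 2) * hcast
  · push_cast
    linear_combination (-(n : ℚ) * ((n / 2 : ℕ) : ℚ) / 2) * hcast
end
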